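/- arXiv:1009.2061 — 2 statements merged into one kernel-verified Lean document; each statement's English description precedes it below -/
import Mathlib

section
/- Let A and B be commutative noetherian local algebras over a field k, both with residue field k, and let s : A → B be a local ring homomorphism. Suppose that for every finite-dimensional commutative local k-algebra C, every local k-algebra homomorphism A → C factors as the composition of s with some k-algebra homomorphism B → C (i.e., precomposition with s is surjective from Hom_alg(B,C) to Hom_alg(A,C)). Then s is injective. -/
/-!
By Krull's intersection theorem a nonzero `a ∈ A` survives in some `A ⧸ 𝔪 ^ (n + 1)`, which is a
finite-dimensional local `k`-algebra since the residue field is `k`. The quotient map factors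
through `s`, so `s a ≠ 0`.
-/

open IsLocalRing

theorem Module.finite_quotient_pow {k R : Type*} [CommRing k] [CommRing R] [Algebra k R]
    {I : Ideal R} (hI : I.FG) [Module.Finite k (R ⧸ I)] (n : ℕ) :
    Module.Finite k (R ⧸ I ^ n) := by
  -- `I / I ^ n` is a finitely generated nilpotent ideal of `R ⧸ I ^ n`.
  obtain rfl | hn := eq_or_ne n 0
  · rw [pow_zero, Ideal.one_eq_top]
    infer_instance
  have hle : I ^ n ≤ I := Ideal.pow_le_self hn
  have hker : RingHom.ker (Ideal.Quotient.factorₐ k hle) = I.map (Ideal.Quotient.mk (I ^ n)) :=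
    Ideal.Quotient.factor_ker hle
  have hfg : (I.map (Ideal.Quotient.mk (I ^ n))).FG := hI.map _
  refine Module.finite_of_surjective_of_ker_le_nilradical (Ideal.Quotient.factorₐ k hle)
    (Ideal.Quotient.factor_surjective hle) (hker ▸ hfg.isNilpotent_iff_le_nilradical.1 ?_)
    (hker ▸ hfg)
  exact ⟨n, by rw [← Ideal.map_pow, Ideal.map_quotient_self]; rfl⟩

theorem IsLocalRing.finite_residueField {k A : Type*} [CommRing k] [CommRing A] [Algebra k A]
    [IsLocalRing A] (h : Function.Surjective (algebraMap k (ResidueField A))) :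
    Module.Finite k (ResidueField A) :=
  .of_surjective (Algebra.linearMap k _) h

theorem IsLocalRing.eq_zero_of_forall_mem_maximalIdeal_pow_succ {A : Type*} [CommRing A]
    [IsLocalRing A] [IsNoetherianRing A] {a : A} (h : ∀ n, a ∈ maximalIdeal A ^ (n + 1)) :
    a = 0 := by
  have hKrull :=
    Ideal.iInf_pow_eq_bot_of_isLocalRing (maximalIdeal A) (maximalIdeal.isMaximal A).ne_top
  rw [← Ideal.mem_bot, ← hKrull, Ideal.mem_iInf]
  exact fun n => Ideal.pow_le_pow_right n.le_succ (h n)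

theorem stmt0_general {k : Type} [Field k]
    (A B : Type) [CommRing A] [CommRing B]
    [Algebra k A] [Algebra k B]
    [IsLocalRing A]
    [IsNoetherianRing A]
    (hresA : Function.Bijective (algebraMap k (IsLocalRing.ResidueField A)))
    (s : A →ₐ[k] B)
    (hsurj : ∀ (C : Type) [CommRing C] [Algebra k C] [IsLocalRing C],
      FiniteDimensional k C →
      ∀ (f : A →ₐ[k] C), IsLocalHom (f : A →+* C) →
        ∃ g : B →ₐ[k] C, g.comp s = f) :
    Function.Injective s := by
  refine (injective_iff_map_eq_zero s).2 fun a ha => eq_zero_of_forall_mem_maximalIdeal_pow_succ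
    fun n => ?_
  let C := A ⧸ maximalIdeal A ^ (n + 1)
  have : Nontrivial C := Ideal.Quotient.nontrivial_iff.2
    (ne_top_of_le_ne_top (maximalIdeal.isMaximal A).ne_top (Ideal.pow_le_self n.succ_ne_zero))
  have : IsLocalRing C := .of_surjective' _ Ideal.Quotient.mk_surjective
  have : Module.Finite k (A ⧸ maximalIdeal A) := finite_residueField hresA.2
  obtain ⟨g, hg⟩ := hsurj C (Module.finite_quotient_pow (IsNoetherian.noetherian _) _)
    (Ideal.Quotient.mkₐ k _) (.of_surjective _ Ideal.Quotient.mk_surjective)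
  rw [← Ideal.Quotient.eq_zero_iff_mem, ← Ideal.Quotient.mkₐ_eq_mk k, ← hg, AlgHom.comp_apply, ha,
    map_zero]

/-- Lemma 5.6 (`lem:s is scheme-theoretically surjective`): if `A, B` are commutative
noetherian local `k`-algebras with residue field `k` and `s : A →ₐ[k] B` is a local
homomorphism such that for every finite-dimensional commutative local `k`-algebra `C`,
every local `k`-algebra homomorphism `A → C` factors through `s`, then `s` is injective. -/
theorem stmt0 {k : Type} [Field k]
    (A B : Type) [CommRing A] [CommRing B]
    [Algebra k A] [Algebra k B]
    [IsLocalRing A] [IsLocalRing B]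
    [IsNoetherianRing A] [IsNoetherianRing B]
    (hresA : Function.Bijective (algebraMap k (IsLocalRing.ResidueField A)))
    (hresB : Function.Bijective (algebraMap k (IsLocalRing.ResidueField B)))
    (s : A →ₐ[k] B) (hs : IsLocalHom (s : A →+* B))
    (hsurj : ∀ (C : Type) [CommRing C] [Algebra k C] [IsLocalRing C],
      FiniteDimensional k C →
      ∀ (f : A →ₐ[k] C), IsLocalHom (f : A →+* C) →
        ∃ g : B →ₐ[k] C, g.comp s = f) :
    Function.Injective s :=
  stmt0_general A B hresA s hsurj
end

section
/- Let A be a commutative noetherian ring and J an ideal of A admitting a presentation A^m --M--> A^n → J → 0, where M is an n×m matrix acting by left multiplication. Let A' := A[t_1, …, t_{n-1}]/I where I is the ideal generated by the entries of the row vector (t_1, …, t_{n-1}, 1)·M. Let P' be a prime ideal of A' and P := P' ∩ A. If P and J are comaximal (P + J = A), then P·A' = P'. -/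
/-!
Let `γ ∈ A'` be the image of the last generator `g_n`. The syzygy `g_n e_k - g_k e_n` of `J`
lifts through `M`, so the defining relations of `A'` force `γ t_k = g_k`. Hence `A'[1/γ]` is a
quotient of `A[1/g_n]`: every `y ∈ A'` has `γ^k y ∈ A`. Since `J A' ⊆ γ A'`, comaximality of
`P` and `J` makes `γ` a unit modulo `P A'`. For `x ∈ P'` we get `γ^k x ∈ P' ∩ A = P`, and
therefore `x ∈ P A'`.
-/

open MvPolynomial

namespace Ideal

variable {A B : Type*} [CommRing A] [CommRing B]

theorem mem_of_pow_mul_mem_of_sup_span_eq_top {Q : Ideal B} {γ x : B}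
    (hco : Q ⊔ span {γ} = ⊤) (k : ℕ) (hx : γ ^ k * x ∈ Q) : x ∈ Q := by
  have hcop : span {γ ^ k} ⊔ Q = ⊤ := by
    rw [← span_singleton_pow, sup_comm]
    exact sup_pow_eq_top hco
  obtain ⟨s, q, hq, hsq⟩ :=
    mem_span_singleton_sup.1 (hcop ▸ Submodule.mem_top : (1 : B) ∈ _)
  rw [show x = s * (γ ^ k * x) + q * x by linear_combination (-x) * hsq]
  exact add_mem (mul_mem_left _ _ hx) (mul_mem_right _ _ hq)

theorem map_comap_eq_of_sup_span_eq_top (φ : A →+* B) {γ : B}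
    (hγ : ∀ y, ∃ k : ℕ, γ ^ k * y ∈ φ.range) (P' : Ideal B)
    (hco : (P'.comap φ).map φ ⊔ span {γ} = ⊤) : (P'.comap φ).map φ = P' := by
  refine le_antisymm map_comap_le fun x hx => ?_
  obtain ⟨k, a, ha⟩ := hγ x
  refine mem_of_pow_mul_mem_of_sup_span_eq_top hco k (ha ▸ mem_map_of_mem φ ?_)
  exact mem_comap.2 (ha ▸ P'.mul_mem_left _ hx)

end Ideal

theorem MvPolynomial.exists_pow_mul_mem_range {σ A B : Type*} [CommRing A] [CommRing B]
    [Algebra A B] (f : MvPolynomial σ A →ₐ[A] B) {c : A}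
    (hX : ∀ i, algebraMap A B c * f (X i) ∈ (algebraMap A B).range) (q : MvPolynomial σ A) :
    ∃ k : ℕ, algebraMap A B c ^ k * f q ∈ (algebraMap A B).range := by
  induction q using MvPolynomial.induction_on with
  | C a => exact ⟨0, a, by simp [← algebraMap_eq]⟩
  | add q r hq hr =>
    obtain ⟨k, a, ha⟩ := hq
    obtain ⟨l, b, hb⟩ := hr
    refine ⟨k + l, c ^ l * a + c ^ k * b, ?_⟩
    simp only [map_add, map_mul, map_pow, ha, hb]
    ring
  | mul_X q i hq =>
    obtain ⟨k, a, ha⟩ := hq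
    obtain ⟨b, hb⟩ := hX i
    refine ⟨k + 1, a * b, ?_⟩
    simp only [map_mul, ha, hb]
    ring

section ProjChart

variable {A : Type*} [CommRing A] {n m : ℕ} (M : Matrix (Fin (n + 1)) (Fin m) A)
  (g : Fin (n + 1) → A)

noncomputable abbrev chartCoord : Fin (n + 1) → MvPolynomial (Fin n) A :=
  Fin.snoc (fun i => X i) 1

noncomputable def chartIdeal : Ideal (MvPolynomial (Fin n) A) :=
  Ideal.span {p | ∃ j : Fin m, p = ∑ i, chartCoord i * C (M i j)}

local notation "A'" => MvPolynomial (Fin n) A ⧸ chartIdeal M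

theorem sum_chartCoord_mul_algebraMap_eq_zero (j : Fin m) :
    ∑ i, Ideal.Quotient.mk (chartIdeal M) (chartCoord i) * algebraMap A A' (M i j) = 0 := by
  simp only [← Ideal.Quotient.mk_algebraMap, MvPolynomial.algebraMap_eq, ← map_mul, ← map_sum]
  exact Ideal.Quotient.eq_zero_iff_mem.2 (Ideal.subset_span ⟨j, rfl⟩)

variable {M g}

theorem sum_algebraMap_mul_chartCoord_eq_zero
    (hker : ∀ c : Fin (n + 1) → A,
      ∑ i, c i * g i = 0 → ∃ d : Fin m → A, ∀ i, c i = ∑ j, M i j * d j)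
    {c : Fin (n + 1) → A} (hc : ∑ i, c i * g i = 0) :
    ∑ i, algebraMap A A' (c i) * Ideal.Quotient.mk (chartIdeal M) (chartCoord i) = 0 := by
  obtain ⟨d, hd⟩ := hker c hc
  calc ∑ i, algebraMap A A' (c i) * Ideal.Quotient.mk (chartIdeal M) (chartCoord i)
      = ∑ j, algebraMap A A' (d j) *
          ∑ i, Ideal.Quotient.mk (chartIdeal M) (chartCoord i) * algebraMap A A' (M i j) := by
        simp only [hd, map_sum, map_mul, Finset.sum_mul, Finset.mul_sum]
        rw [Finset.sum_comm]
        exact Finset.sum_congr rfl fun _ _ => Finset.sum_congr rfl fun _ _ => by ring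
    _ = 0 := by simp only [sum_chartCoord_mul_algebraMap_eq_zero, mul_zero, Finset.sum_const_zero]

theorem algebraMap_last_mul_chartCoord
    (hker : ∀ c : Fin (n + 1) → A,
      ∑ i, c i * g i = 0 → ∃ d : Fin m → A, ∀ i, c i = ∑ j, M i j * d j)
    (k : Fin (n + 1)) :
    algebraMap A A' (g (Fin.last n)) * Ideal.Quotient.mk (chartIdeal M) (chartCoord k) =
      algebraMap A A' (g k) := by
  have := sum_algebraMap_mul_chartCoord_eq_zero hker
    (c := Pi.single k (g (Fin.last n)) - Pi.single (Fin.last n) (g k)) (by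
      simp only [Pi.sub_apply, sub_mul, Finset.sum_sub_distrib, Pi.single_apply, ite_mul,
        zero_mul, Finset.sum_ite_eq', Finset.mem_univ, if_true]
      ring)
  simpa only [Pi.sub_apply, map_sub, sub_mul, Finset.sum_sub_distrib, Pi.single_apply,
    apply_ite (algebraMap A _), map_zero, ite_mul, zero_mul, Finset.sum_ite_eq', Finset.mem_univ,
    if_true, chartCoord, Fin.snoc_last, map_one, mul_one, sub_eq_zero] using this

theorem exists_pow_algebraMap_last_mul_mem_range
    (hker : ∀ c : Fin (n + 1) → A,
      ∑ i, c i * g i = 0 → ∃ d : Fin m → A, ∀ i, c i = ∑ j, M i j * d j)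
    (y : A') : ∃ k : ℕ, algebraMap A A' (g (Fin.last n)) ^ k * y ∈ (algebraMap A A').range := by
  obtain ⟨q, rfl⟩ := Ideal.Quotient.mk_surjective y
  rw [← Ideal.Quotient.mkₐ_eq_mk A]
  refine MvPolynomial.exists_pow_mul_mem_range _ (fun i => ⟨g i.castSucc, ?_⟩) q
  have := algebraMap_last_mul_chartCoord hker i.castSucc
  rw [chartCoord, Fin.snoc_castSucc] at this
  rw [Ideal.Quotient.mkₐ_eq_mk, this]

theorem map_sup_span_algebraMap_last_eq_top
    (hker : ∀ c : Fin (n + 1) → A,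
      ∑ i, c i * g i = 0 → ∃ d : Fin m → A, ∀ i, c i = ∑ j, M i j * d j)
    {P : Ideal A} (hco : P ⊔ Ideal.span (Set.range g) = ⊤) :
    P.map (algebraMap A A') ⊔ Ideal.span {algebraMap A A' (g (Fin.last n))} = ⊤ := by
  have hJ : (Ideal.span (Set.range g)).map (algebraMap A A') ≤
      Ideal.span {algebraMap A A' (g (Fin.last n))} := by
    rw [Ideal.map_span, Ideal.span_le]
    rintro _ ⟨_, ⟨k, rfl⟩, rfl⟩
    exact Ideal.mem_span_singleton'.2
      ⟨_, (mul_comm _ _).trans (algebraMap_last_mul_chartCoord hker k)⟩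
  rw [eq_top_iff, ← Ideal.map_top (algebraMap A A'), ← hco, Ideal.map_sup]
  exact sup_le_sup_left hJ _

end ProjChart

theorem stmt1_general {A : Type} [CommRing A]
    (n m : ℕ) (M : Matrix (Fin (n + 1)) (Fin m) A)
    (g : Fin (n + 1) → A) (J : Ideal A)
    (hJ : J = Ideal.span (Set.range g))
    -- exactness of  A^m --M--> A^{n+1} --g--> J → 0 :
    (hexact : ∀ c : Fin (n + 1) → A,
      (∑ i, c i * g i = 0) ↔ ∃ d : Fin m → A, ∀ i, c i = ∑ j, M i j * d j)
    -- the row vector (t_1, …, t_n, 1):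
    (v : Fin (n + 1) → MvPolynomial (Fin n) A)
    (hv : v = Fin.snoc (fun i => X i) 1)
    (I : Ideal (MvPolynomial (Fin n) A))
    (hI : I = Ideal.span {p | ∃ j : Fin m, p = ∑ i, v i * C (M i j)})
    (φ : A →+* MvPolynomial (Fin n) A ⧸ I)
    (hφ : φ = (Ideal.Quotient.mk I).comp (C : A →+* MvPolynomial (Fin n) A))
    (P' : Ideal (MvPolynomial (Fin n) A ⧸ I))
    (P : Ideal A) (hP : P = P'.comap φ)
    (hco : P ⊔ J = ⊤) :
    P.map φ = P' := by
  subst hJ hv hI hP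
  obtain rfl : φ = algebraMap A (MvPolynomial (Fin n) A ⧸ chartIdeal M) := hφ
  have hker := fun c => (hexact c).1
  exact Ideal.map_comap_eq_of_sup_span_eq_top _ (exists_pow_algebraMap_last_mul_mem_range hker)
    P' (map_sup_span_algebraMap_last_eq_top hker hco)

/-- Lemma 4.5 (`lem-proj`): let `A` be commutative noetherian, `J` an ideal with a
presentation `A^m --M--> A^{n+1} → J → 0` (generators `g i`), and
`A' := A[t_1,…,t_n]/((t_1,…,t_n,1)·M)`.  If a prime `P'` of `A'` satisfies that
`P := P' ∩ A` is comaximal with `J`, then `P·A' = P'`. -/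
theorem stmt1 {A : Type} [CommRing A] [IsNoetherianRing A]
    (n m : ℕ) (M : Matrix (Fin (n + 1)) (Fin m) A)
    (g : Fin (n + 1) → A) (J : Ideal A)
    (hJ : J = Ideal.span (Set.range g))
    -- exactness of  A^m --M--> A^{n+1} --g--> J → 0 :
    (hexact : ∀ c : Fin (n + 1) → A,
      (∑ i, c i * g i = 0) ↔ ∃ d : Fin m → A, ∀ i, c i = ∑ j, M i j * d j)
    -- the row vector (t_1, …, t_n, 1):
    (v : Fin (n + 1) → MvPolynomial (Fin n) A)
    (hv : v = Fin.snoc (fun i => X i) 1)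
    (I : Ideal (MvPolynomial (Fin n) A))
    (hI : I = Ideal.span {p | ∃ j : Fin m, p = ∑ i, v i * C (M i j)})
    (φ : A →+* MvPolynomial (Fin n) A ⧸ I)
    (hφ : φ = (Ideal.Quotient.mk I).comp (C : A →+* MvPolynomial (Fin n) A))
    (P' : Ideal (MvPolynomial (Fin n) A ⧸ I)) (hP' : P'.IsPrime)
    (P : Ideal A) (hP : P = P'.comap φ)
    (hco : P ⊔ J = ⊤) :
    P.map φ = P' :=
  stmt1_general n m M g J hJ hexact v hv I hI φ hφ P' P hP hco
end
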